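/- Let A be a unital complex *-algebra that is algebraic and admits a pre-C*-norm ‖·‖. Then for every a ∈ A one has a*a ≤ ‖a‖²·1, i.e., ‖a‖²·1 − a*a is a positive element of A (a finite sum of elements of the form x*x). -/

import Mathlib

/-- A (possibly non-unital) complex algebra is *algebraic* if every element generates a
finite-dimensional subalgebra (equivalently, every element is a root of a nonzero
polynomial with complex coefficients). -/
def IsAlgebraicAlgebra (A : Type*) [NonUnitalRing A] [Module ℂ A] : Prop :=
  ∀ a : A, ∃ S : NonUnitalSubalgebra ℂ A, a ∈ S ∧ FiniteDimensional ℂ S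

/-- A pre-C*-norm on a complex `*`-algebra: a submultiplicative norm `σ` with
`σ (x* x) = σ x ^ 2`. -/
def HasPreCstarNorm (A : Type*) [NonUnitalRing A] [Module ℂ A] [Star A] : Prop :=
  ∃ σ : A → ℝ,
    (∀ a : A, σ a = 0 ↔ a = 0) ∧
    (∀ (c : ℂ) (a : A), σ (c • a) = ‖c‖ * σ a) ∧
    (∀ a b : A, σ (a + b) ≤ σ a + σ b) ∧
    (∀ a b : A, σ (a * b) ≤ σ a * σ b) ∧
    (∀ a : A, σ (star a * a) = σ a ^ 2)

/-- The involution is proper if `a* a = 0` implies `a = 0`. -/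
def HasProperInvolution (A : Type*) [NonUnitalRing A] [Star A] : Prop :=
  ∀ a : A, star a * a = 0 → a = 0

/-- Hermitian: every selfadjoint element has real spectrum (computed in the
unitization `ℂ ⊕ A`). -/
def IsHermitianStarAlgebra (A : Type*) [NonUnitalRing A] [Module ℂ A]
    [SMulCommClass ℂ A A] [IsScalarTower ℂ A A] [Star A] : Prop :=
  ∀ a : A, star a = a → ∀ z ∈ spectrum ℂ (a : Unitization ℂ A), z.im = 0

/-- Semisimple: the Jacobson radical is `{0}` (expressed via the unitization, whose
Jacobson radical meets `A` exactly in the Jacobson radical of `A`). -/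
def IsSemisimpleAlgebra (A : Type*) [NonUnitalRing A] [Module ℂ A]
    [SMulCommClass ℂ A A] [IsScalarTower ℂ A A] : Prop :=
  ∀ a : A, (a : Unitization ℂ A) ∈ (⊥ : Ideal (Unitization ℂ A)).jacobson → a = 0

/-- A positive element: a finite sum of elements of the form `a* a`. -/
def IsPositiveElem {A : Type*} [NonUnitalRing A] [Star A] (x : A) : Prop :=
  ∃ (n : ℕ) (f : Fin n → A), x = ∑ i, star (f i) * f i

/-!
For selfadjoint `x`, properness of the involution makes every nilpotent polynomial expression
`p(x)` vanish: `p(x)* p(x)` is selfadjoint and nilpotent, and a selfadjoint nilpotent dies under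
repeated squaring. Hence the minimal polynomial of `x` is squarefree, and `p(x)` depends only on
the values of `p` at its roots. Each root `τ` is an eigenvalue, `e x = τ e` for a nonzero
polynomial `e` in `x`, so `τ` is real and, by the C*-identity applied to `e* e`, `‖τ‖ ≤ σ x`.
For `y = σ(a* a) - a* a` this puts all roots in `[0, ∞)`, and the polynomial `g` interpolating
`√τ` at the roots gives `y = g(y)* g(y)`.
-/

open Polynomial ComplexConjugate

theorem exists_ne_zero_mul_eq_smul_of_isRoot {K A : Type*} [Field K] [Ring A] [Algebra K A]
    {x : A} (hx : IsIntegral K x) {τ : K} (hτ : (minpoly K x).IsRoot τ) :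
    ∃ e : A, e ≠ 0 ∧ e * x = τ • e := by
  set q := minpoly K x /ₘ (X - C τ)
  have hq : (X - C τ) * q = minpoly K x := mul_divByMonic_eq_iff_isRoot.2 hτ
  refine ⟨aeval x q, minpoly.aeval_ne_zero_of_dvdNotUnit_minpoly hx ?_ ?_, ?_⟩
  · exact (monic_X_sub_C τ).of_mul_monic_left (hq ▸ minpoly.monic hx)
  · refine ⟨fun h => minpoly.ne_zero hx (by rw [← hq, h, mul_zero]), X - C τ,
      not_isUnit_X_sub_C τ, by rw [← hq, mul_comm]⟩
  · have := congrArg (aeval x) (mul_comm q (X - C τ) ▸ hq)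
    rwa [map_mul, minpoly.aeval, map_sub, aeval_X, aeval_C, Algebra.algebraMap_eq_smul_one,
      mul_sub, mul_smul_one, sub_eq_zero] at this

section ProperInvolution

variable {A : Type*} [Ring A] [StarRing A]

theorem HasProperInvolution.eq_zero_of_isNilpotent (hA : HasProperInvolution A) {x : A}
    (hx : IsSelfAdjoint x) (hn : IsNilpotent x) : x = 0 := by
  obtain ⟨n, hn⟩ := hn
  suffices ∀ m : ℕ, x ^ 2 ^ m = 0 → x = 0 from
    this n (pow_eq_zero_of_le Nat.lt_two_pow_self.le hn)
  intro m
  induction m with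
  | zero => simp
  | succ m ih =>
    intro h
    refine ih (hA _ ?_)
    rwa [(hx.pow _).star_eq, ← pow_add, ← two_mul, ← Nat.pow_succ']

theorem HasProperInvolution.conj_eq_of_mul_eq_smul [Algebra ℂ A] [StarModule ℂ A]
    (hA : HasProperInvolution A) {x e : A} (hx : IsSelfAdjoint x) (he : e ≠ 0) {τ : ℂ}
    (hex : e * x = τ • e) : conj τ = τ := by
  have hxe : x * star e = conj τ • star e := by
    simpa only [star_mul, hx.star_eq, star_smul, Complex.star_def] using congrArg star hex
  have hee : e * star e ≠ 0 := fun h => he (by simpa using hA (star e) (by simpa using h))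
  -- `conj τ • (e * star e)` and `τ • (e * star e)` both equal `e * x * star e`
  have : (conj τ - τ) • (e * star e) = 0 := by
    rw [sub_smul, ← mul_smul_comm, ← hxe, ← smul_mul_assoc, ← hex, mul_assoc, sub_self]
  exact sub_eq_zero.1 ((smul_eq_zero.1 this).resolve_right hee)

end ProperInvolution

theorem IsSelfAdjoint.star_aeval {A : Type*} [Ring A] [StarRing A] [Algebra ℂ A] [StarModule ℂ A]
    {x : A} (hx : IsSelfAdjoint x) (p : ℂ[X]) :
    star (aeval x p) = aeval x (p.map (starRingEnd ℂ)) := by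
  induction p using Polynomial.induction_on' with
  | add p q hp hq => rw [map_add, star_add, hp, hq, Polynomial.map_add, map_add]
  | monomial n c =>
    rw [Polynomial.map_monomial, aeval_monomial, aeval_monomial, star_mul, star_pow, hx.star_eq,
      ← algebraMap_star_comm, ← Algebra.commutes, starRingEnd_apply]

theorem eval_map_conj_of_conj_eq {p : ℂ[X]} {τ : ℂ} (hτ : conj τ = τ) :
    (p.map (starRingEnd ℂ)).eval τ = conj (p.eval τ) := by
  rw [eval_map, ← hτ, eval₂_hom, hτ]

section Algebraic

variable {A : Type*} [Ring A] [StarRing A] [Algebra ℂ A] [StarModule ℂ A]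

theorem HasProperInvolution.aeval_eq_zero_of_isNilpotent (hA : HasProperInvolution A) {x : A}
    (hx : IsSelfAdjoint x) {p : ℂ[X]} (hp : IsNilpotent (aeval x p)) : aeval x p = 0 := by
  have hcomm : Commute (star (aeval x p)) (aeval x p) := by
    rw [hx.star_aeval]; exact (Commute.all _ _).map (aeval x)
  exact hA _ (hA.eq_zero_of_isNilpotent (.star_mul_self _) (hcomm.isNilpotent_mul_left hp))

theorem HasProperInvolution.squarefree_minpoly (hA : HasProperInvolution A) {x : A}
    (hx : IsSelfAdjoint x) (hint : IsIntegral ℂ x) : Squarefree (minpoly ℂ x) := by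
  -- if `q * q ∣ μ`, then `(q * r)(x)` squares to zero, so `μ ∣ q * r`
  rintro q ⟨r, hr⟩
  have hqr : aeval x (q * r) = 0 := hA.aeval_eq_zero_of_isNilpotent hx
    ⟨2, by
      rw [← map_pow, sq, mul_mul_mul_comm, ← mul_assoc, ← hr, map_mul, minpoly.aeval, zero_mul]⟩
  have hqr0 : q * r ≠ 0 := fun h => minpoly.ne_zero hint (by rw [hr, mul_assoc, h, mul_zero])
  refine isUnit_of_dvd_one ((mul_dvd_mul_iff_right hqr0).1 ?_)
  rw [one_mul, ← mul_assoc, ← hr]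
  exact minpoly.dvd ℂ x hqr

theorem HasProperInvolution.aeval_eq_aeval_of_eval_eq (hA : HasProperInvolution A) {x : A}
    (hx : IsSelfAdjoint x) (hint : IsIntegral ℂ x) {p q : ℂ[X]}
    (h : ∀ τ, (minpoly ℂ x).IsRoot τ → p.eval τ = q.eval τ) : aeval x p = aeval x q := by
  rw [← sub_eq_zero, ← map_sub]
  by_cases hpq : p - q = 0
  · rw [hpq, map_zero]
  obtain ⟨r, hr⟩ : minpoly ℂ x ∣ p - q := by
    refine (IsAlgClosed.splits _).dvd_of_roots_le_roots (minpoly.ne_zero hint) ?_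
    refine (Multiset.le_iff_subset (nodup_roots
      (PerfectField.separable_iff_squarefree.2 (hA.squarefree_minpoly hx hint)))).2 fun τ hτ => ?_
    rw [mem_roots hpq, IsRoot, eval_sub, h τ (isRoot_of_mem_roots hτ), sub_self]
  rw [hr, map_mul, minpoly.aeval, zero_mul]

theorem HasProperInvolution.exists_star_mul_self_eq (hA : HasProperInvolution A) {x : A}
    (hx : IsSelfAdjoint x) (hint : IsIntegral ℂ x)
    (hre : ∀ τ, (minpoly ℂ x).IsRoot τ → 0 ≤ τ.re) : ∃ b : A, star b * b = x := by
  classical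
  set g := Lagrange.interpolate (minpoly ℂ x).roots.toFinset id fun τ => (√τ.re : ℂ)
  refine ⟨aeval x g, ?_⟩
  conv_rhs => rw [← aeval_X (R := ℂ) x]
  rw [hx.star_aeval, ← map_mul]
  refine hA.aeval_eq_aeval_of_eval_eq hx hint fun τ hτ => ?_
  obtain ⟨e, he, hex⟩ := exists_ne_zero_mul_eq_smul_of_isRoot hint hτ
  have hτ_real := hA.conj_eq_of_mul_eq_smul hx he hex
  have hg : g.eval τ = √τ.re := Lagrange.eval_interpolate_at_node _ (Set.injOn_id _)
    (Multiset.mem_toFinset.2 ((mem_roots (minpoly.ne_zero hint)).2 hτ))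
  rw [eval_mul, eval_map_conj_of_conj_eq hτ_real, hg, Complex.conj_ofReal, ← Complex.ofReal_mul,
    Real.mul_self_sqrt (hre τ hτ), eval_X, Complex.conj_eq_iff_re.1 hτ_real]

end Algebraic

theorem hasProperInvolution_of_map_star_mul_self {A : Type*} [NonUnitalRing A] [Star A]
    {σ : A → ℝ} (hzero : ∀ a, σ a = 0 ↔ a = 0) (hstar : ∀ a, σ (star a * a) = σ a ^ 2) :
    HasProperInvolution A := fun a ha =>
  (hzero a).1 (pow_eq_zero_iff two_ne_zero |>.1 (by rw [← hstar, ha, (hzero 0).2 rfl]))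

theorem norm_le_of_mul_eq_smul {A : Type*} [Ring A] [StarRing A] [Algebra ℂ A] {σ : A → ℝ}
    (hzero : ∀ a, σ a = 0 ↔ a = 0) (hsmul : ∀ (c : ℂ) (a : A), σ (c • a) = ‖c‖ * σ a)
    (hmul : ∀ a b, σ (a * b) ≤ σ a * σ b) (hstar : ∀ a, σ (star a * a) = σ a ^ 2)
    {x e : A} (he : e ≠ 0) {τ : ℂ} (hex : e * x = τ • e) : ‖τ‖ ≤ σ x := by
  set p := star e * e
  have hp : p ≠ 0 := fun h => he (hasProperInvolution_of_map_star_mul_self hzero hstar e h)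
  have hp_pos : 0 < σ p := lt_of_le_of_ne (hstar e ▸ sq_nonneg _) (Ne.symm ((hzero p).not.2 hp))
  have hpx : p * x = τ • p := by rw [mul_assoc, hex, mul_smul_comm]
  refine le_of_mul_le_mul_right ?_ hp_pos
  rw [← hsmul, ← hpx, mul_comm (σ x)]
  exact hmul p x

theorem re_nonneg_of_isRoot_minpoly_smul_one_sub {A : Type*} [Ring A] [StarRing A]
    [Algebra ℂ A] {σ : A → ℝ} (hzero : ∀ a, σ a = 0 ↔ a = 0)
    (hsmul : ∀ (c : ℂ) (a : A), σ (c • a) = ‖c‖ * σ a) (hmul : ∀ a b, σ (a * b) ≤ σ a * σ b)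
    (hstar : ∀ a, σ (star a * a) = σ a ^ 2) {x : A}
    (hint : IsIntegral ℂ ((σ x : ℂ) • (1 : A) - x)) {τ : ℂ}
    (hτ : (minpoly ℂ ((σ x : ℂ) • (1 : A) - x)).IsRoot τ) : 0 ≤ τ.re := by
  obtain ⟨e, he, hey⟩ := exists_ne_zero_mul_eq_smul_of_isRoot hint hτ
  have hex : e * x = ((σ x : ℂ) - τ) • e := by
    rw [sub_smul, ← hey, mul_sub, mul_smul_one, sub_sub_cancel]
  have := (Complex.re_le_norm _).trans (norm_le_of_mul_eq_smul hzero hsmul hmul hstar he hex)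
  rw [Complex.sub_re, Complex.ofReal_re] at this
  linarith

theorem star_mul_self_le_norm_sq_smul_one_general (A : Type*) [Ring A] [Algebra ℂ A]
    [StarRing A] [StarModule ℂ A]
    (halg : ∀ a : A, IsAlgebraic ℂ a) (σ : A → ℝ)
    (hzero : ∀ a : A, σ a = 0 ↔ a = 0)
    (hsmul : ∀ (c : ℂ) (a : A), σ (c • a) = ‖c‖ * σ a)
    (hmul : ∀ a b : A, σ (a * b) ≤ σ a * σ b)
    (hstar : ∀ a : A, σ (star a * a) = σ a ^ 2) :
    ∀ a : A, IsPositiveElem (((σ a : ℂ) ^ 2) • (1 : A) - star a * a) := by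
  intro a
  have hy : IsSelfAdjoint ((σ (star a * a) : ℂ) • (1 : A) - star a * a) :=
    .sub (.smul (Complex.conj_ofReal _) (.one A)) (.star_mul_self a)
  obtain ⟨b, hb⟩ := (hasProperInvolution_of_map_star_mul_self hzero hstar).exists_star_mul_self_eq
    hy (halg _).isIntegral
    fun τ => re_nonneg_of_isRoot_minpoly_smul_one_sub hzero hsmul hmul hstar (halg _).isIntegral
  refine ⟨1, fun _ => b, ?_⟩
  rw [Fin.sum_univ_one, hb, hstar, Complex.ofReal_pow]

/-- In a unital algebraic complex `*`-algebra with a pre-C*-norm `σ`,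
for every `a` the element `σ(a)² · 1 − a* a` is positive, i.e. `a* a ≤ σ(a)² · 1`. -/
theorem star_mul_self_le_norm_sq_smul_one (A : Type*) [Ring A] [Algebra ℂ A]
    [StarRing A] [StarModule ℂ A]
    (halg : ∀ a : A, IsAlgebraic ℂ a) (σ : A → ℝ)
    (hzero : ∀ a : A, σ a = 0 ↔ a = 0)
    (hsmul : ∀ (c : ℂ) (a : A), σ (c • a) = ‖c‖ * σ a)
    (hadd : ∀ a b : A, σ (a + b) ≤ σ a + σ b)
    (hmul : ∀ a b : A, σ (a * b) ≤ σ a * σ b)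
    (hstar : ∀ a : A, σ (star a * a) = σ a ^ 2) :
    ∀ a : A, IsPositiveElem (((σ a : ℂ) ^ 2) • (1 : A) - star a * a) :=
  star_mul_self_le_norm_sq_smul_one_general A halg σ hzero hsmul hmul hstar
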